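/- Let r, t, k, f ∈ ℕ and let P^{(1)}, …, P^{(f)} ∈ ℤ[x] be non-constant polynomials with positive leading coefficients and P^{(j)}(0) = 0 for all j. There exists a partition ℕ^k = E_1 ∪ ⋯ ∪ E_r such that for every t-coloring ℕ^k = F_1 ∪ ⋯ ∪ F_t, there exist a single color class F_m, an element x_0 ∈ ℕ, and a set H ⊆ ℕ of positive lower density such that for every h ∈ H, every j ∈ {1, …, f}, and every i ∈ {1, …, r}, the set (F_m + (x_0 + P^{(j)}(h))·𝟙_k) ∩ E_i is infinite. -/

import Mathlib

/-!
Colour `n ∈ ℕ` by its base-`r` digit at position `ι(n)`, where `ι` is constant on each block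
`[q², (q+1)²)` and takes every value on infinitely many blocks; `E_i` consists of the points whose
first coordinate has colour `i`. Given a colouring `F`, look at the diagonal. For each position `a`
some colour is taken by infinitely many multiples `n` of `r^(a+1)` that lie at the start of a block
of index `a`, so that `n + c` still has index `a` and shares its digit at `a` with `c`; some colour
`m` is chosen in this way for infinitely many positions `a₀ < a₁ < ⋯`. With
`x = ∑_{i<r} i r^(aᵢ)` and `Q = r^(a_r)`, every shift `c ≡ x (mod Q)` therefore moves infinitely
many points of colour `m` into every `E_i`. Finally `Q ∣ P(h)` whenever `Q ∣ h`, since `P(0) = 0`,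
and these `h` have positive density.
-/

open Filter
open scoped Classical

namespace Set

theorem Infinite.exists_infinite_fiber {α β : Type*} [Finite β] {s : Set α} (hs : s.Infinite)
    (g : α → β) : ∃ b, (s ∩ g ⁻¹' {b}).Infinite := by
  by_contra! h
  exact hs <| (Set.finite_iUnion h).subset fun x hx => Set.mem_iUnion.2 ⟨g x, hx, rfl⟩

end Set

namespace Polynomial

theorem dvd_eval_of_eval_zero {R : Type*} [CommRing R] {P : R[X]} (h0 : P.eval 0 = 0)
    {a b : R} (hab : a ∣ b) : a ∣ P.eval b :=
  hab.trans (by simpa [h0] using sub_dvd_eval_sub b 0 P)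

theorem eventually_nonneg_eval_natCast {P : ℤ[X]} (hP : 0 < P.leadingCoeff) :
    ∀ᶠ n : ℕ in atTop, 0 ≤ P.eval (n : ℤ) := by
  set Q := P.map (Int.castRingHom ℝ)
  have hinj : Function.Injective (Int.castRingHom ℝ) := Int.cast_injective
  have hQ : Q ≠ 0 := (Polynomial.map_ne_zero_iff hinj).2 (leadingCoeff_ne_zero.1 hP.ne')
  have hlc : 0 ≤ Q.leadingCoeff := by
    rw [leadingCoeff_map_of_injective hinj, eq_intCast]
    exact_mod_cast hP.le
  obtain ⟨b, hb⟩ := (finite_setOfPred_isRoot hQ).bddAbove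
  filter_upwards [tendsto_natCast_atTop_atTop.eventually_ge_atTop b] with n hn
  have := zero_le_eval_of_roots_le_of_leadingCoeff_nonneg (fun y hy => (hb hy).trans hn) hlc
  rw [← Int.cast_natCast, eval_intCast_map, eq_intCast] at this
  exact_mod_cast this

end Polynomial

noncomputable def lowerDensity (H : Set ℕ) : ℝ :=
  atTop.liminf fun N : ℕ => (((Finset.Icc 1 N).filter (fun n => n ∈ H)).card : ℝ) / N

theorem lowerDensity_pos_of_multiples {H : Set ℕ} {Q B : ℕ} (hQ : 0 < Q)
    (hH : ∀ n, Q ∣ n → B ≤ n → n ∈ H) : 0 < lowerDensity H := by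
  unfold lowerDensity
  set count := fun N : ℕ => ((Finset.Icc 1 N).filter (fun n => n ∈ H)).card
  -- the multiples `Q * j` with `B < j ≤ N / Q` are counted
  have hcount : ∀ N, N ≤ Q * (count N + B + 1) := by
    intro N
    have hinj : N / Q - B ≤ count N := by
      rw [← Nat.card_Ioc]
      refine Finset.card_le_card_of_injOn (Q * ·) (fun j hj => ?_)
        (fun a _ b _ hab => Nat.eq_of_mul_eq_mul_left hQ hab)
      have hj' := Finset.mem_Ioc.1 hj
      have hjQ : Q * j ≤ N := mul_comm j Q ▸ (Nat.le_div_iff_mul_le hQ).1 hj'.2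
      have hjle : j ≤ Q * j := Nat.le_mul_of_pos_left j hQ
      simp only [Finset.coe_filter, Set.mem_ofPred_eq, Finset.mem_Icc]
      exact ⟨⟨by omega, hjQ⟩, hH _ (dvd_mul_right Q j) (by omega)⟩
    calc N ≤ Q * (N / Q + 1) := (Nat.lt_mul_div_succ N hQ).le
      _ ≤ Q * (count N + B + 1) := Nat.mul_le_mul_left _ (by omega)
  have hlower : ∀ᶠ N : ℕ in atTop, 1 / (2 * Q : ℝ) ≤ count N / N := by
    filter_upwards [eventually_ge_atTop (2 * Q * (B + 1) + 1)] with N hN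
    have hN0 : (0 : ℝ) < N := by exact_mod_cast (by omega : 0 < N)
    have hN' : (2 * Q * (B + 1) + 1 : ℝ) ≤ N := by exact_mod_cast hN
    have h : (N : ℝ) ≤ Q * (count N + B + 1) := by exact_mod_cast hcount N
    rw [div_le_div_iff₀ (by positivity) hN0]
    linarith
  have hupper : ∀ N : ℕ, (count N : ℝ) / N ≤ 1 := fun N =>
    div_le_one_of_le₀ (by exact_mod_cast (Finset.card_filter_le _ _).trans (Nat.card_Icc 1 N).le)
      N.cast_nonneg
  exact (by positivity : (0 : ℝ) < 1 / (2 * Q)).trans_le <|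
    le_liminf_of_le (isBoundedUnder_of ⟨1, hupper⟩).isCoboundedUnder_ge hlower

namespace Raimi

def digit (r a n : ℕ) : ℕ := n / r ^ a % r

theorem digit_lt {r : ℕ} (hr : 0 < r) (a n : ℕ) : digit r a n < r := Nat.mod_lt _ hr

theorem digit_congr {r a x y : ℕ} (h : x ≡ y [MOD r ^ (a + 1)]) : digit r a x = digit r a y := by
  simp only [digit, ← Nat.mod_mul_right_div_self, ← pow_succ]
  exact congrArg (· / r ^ a) h

theorem sum_mul_pow_lt {r : ℕ} (hr : 0 < r) {σ : ℕ → ℕ} (hσ : StrictMono σ) {d : ℕ → ℕ}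
    {L : ℕ} (hd : ∀ j < L, d j < r) : ∑ j ∈ Finset.range L, d j * r ^ σ j < r ^ σ L := by
  induction L with
  | zero => simpa using pow_pos hr (σ 0)
  | succ L ih =>
    have hlow := ih fun j hj => hd j (by omega)
    calc ∑ j ∈ Finset.range (L + 1), d j * r ^ σ j
        < r ^ σ L + d L * r ^ σ L := by
          rw [Finset.sum_range_succ]; exact Nat.add_lt_add_right hlow _
      _ = (d L + 1) * r ^ σ L := by ring
      _ ≤ r * r ^ σ L := Nat.mul_le_mul_right _ (hd L L.lt_succ_self)
      _ = r ^ (σ L + 1) := by ring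
      _ ≤ r ^ σ (L + 1) := Nat.pow_le_pow_right hr (hσ L.lt_succ_self)

theorem digit_sum_mul_pow {r : ℕ} {σ : ℕ → ℕ} (hσ : StrictMono σ) {d : ℕ → ℕ} :
    ∀ {L ℓ}, (∀ j < L, d j < r) → ℓ < L →
      digit r (σ ℓ) (∑ j ∈ Finset.range L, d j * r ^ σ j) = d ℓ
  | L + 1, ℓ, hd, hℓ => by
    have hd' : ∀ j < L, d j < r := fun j hj => hd j (by omega)
    rw [Finset.sum_range_succ]
    rcases (Nat.lt_succ_iff_lt_or_eq.1 hℓ) with hℓ | rfl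
    · have hhigh : r ^ (σ ℓ + 1) ∣ d L * r ^ σ L :=
        Dvd.dvd.mul_left (pow_dvd_pow r (hσ hℓ)) _
      rw [digit_congr ((Nat.modEq_zero_iff_dvd.2 hhigh).add_left _), add_zero]
      exact digit_sum_mul_pow hσ hd' hℓ
    · have hr : 0 < r := (Nat.zero_le _).trans_lt (hd ℓ ℓ.lt_succ_self)
      rw [digit, Nat.add_mul_div_right _ _ (pow_pos hr _),
        Nat.div_eq_of_lt (sum_mul_pow_lt hr hσ hd'), zero_add,
        Nat.mod_eq_of_lt (hd ℓ ℓ.lt_succ_self)]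

/-- Enumerating the blocks `[q², (q+1)²)` along `Nat.unpair` makes every value the block index of
infinitely many, arbitrarily long, blocks. -/
def blockIndex (n : ℕ) : ℕ := (Nat.unpair (Nat.sqrt n)).2

def raimiColor (r n : ℕ) : ℕ := digit r (blockIndex n) n

def stableMultiples (p a : ℕ) : Set ℕ :=
  {n | p ∣ n ∧ ∀ d ≤ Nat.sqrt n, blockIndex (n + d) = a}

theorem exists_gt_mem_stableMultiples {p : ℕ} (hp : 0 < p) (a B : ℕ) :
    ∃ n ∈ stableMultiples p a, B < n := by
  set q := Nat.pair (B + p) a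
  have hq : B + p ≤ q := Nat.left_le_pair _ _
  have hqq : q ≤ q * q := Nat.le_mul_self q
  -- the first multiple of `p` after `q²`
  set n := p * (q * q / p + 1)
  have hn : q * q < n ∧ n ≤ q * q + p := by
    have := Nat.div_add_mod (q * q) p
    have := Nat.mod_lt (q * q) hp
    constructor <;> simp only [n, Nat.mul_add, Nat.mul_one] <;> omega
  have hsqrt : ∀ d ≤ q, Nat.sqrt (n + d) = q := fun d hd => by
    simpa [Nat.add_sub_cancel' (by omega : q * q ≤ n + d)] using
      Nat.sqrt_add_eq q (a := n + d - q * q) (by omega)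
  refine ⟨n, ⟨dvd_mul_right _ _, fun d hd => ?_⟩, by omega⟩
  rw [show Nat.sqrt n = q by simpa using hsqrt 0 q.zero_le] at hd
  simp [blockIndex, hsqrt d hd, q]

theorem stableMultiples_infinite {p : ℕ} (hp : 0 < p) (a : ℕ) : (stableMultiples p a).Infinite :=
  Set.infinite_of_forall_exists_gt (exists_gt_mem_stableMultiples hp a)

theorem raimiColor_add {r a n c : ℕ} (hn : n ∈ stableMultiples (r ^ (a + 1)) a)
    (hc : c ≤ Nat.sqrt n) : raimiColor r (n + c) = digit r a c := by
  rw [raimiColor, hn.2 c hc]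
  exact digit_congr (by simpa using (Nat.modEq_zero_iff_dvd.2 hn.1).add_right c)

theorem exists_color_forall_modEq_infinite {β : Type*} [Finite β] {r : ℕ} (hr : 0 < r)
    (χ : ℕ → β) : ∃ m : β, ∃ Q > 0, ∃ x, ∀ c, c ≡ x [MOD Q] → ∀ i < r,
      {n | χ n = m ∧ raimiColor r (n + c) = i}.Infinite := by
  choose col hcol using fun a =>
    (stableMultiples_infinite (pow_pos hr (a + 1)) a).exists_infinite_fiber χ
  obtain ⟨m, hm⟩ := Set.infinite_univ.exists_infinite_fiber col
  rw [Set.univ_inter] at hm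
  set σ := Nat.nth fun a => col a = m
  have hσ : StrictMono σ := Nat.nth_strictMono hm
  have hσm : ∀ i, col (σ i) = m := Nat.nth_mem_of_infinite hm
  refine ⟨m, r ^ σ r, pow_pos hr _, ∑ j ∈ Finset.range r, j * r ^ σ j, fun c hc i hi => ?_⟩
  have hdigit : digit r (σ i) c = i :=
    (digit_congr (hc.of_dvd (pow_dvd_pow r (hσ hi)))).trans
      (digit_sum_mul_pow hσ (fun j hj => hj) hi)
  refine ((hcol (σ i)).sdiff (Set.finite_lt_nat (c * c))).mono ?_
  rintro n ⟨⟨hn, hχn⟩, hbig⟩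
  exact ⟨hσm i ▸ hχn, (raimiColor_add hn (Nat.le_sqrt.2 (not_lt.1 hbig))).trans hdigit⟩

end Raimi

open Raimi

theorem raimi_polynomial_general (r t k f : ℕ) (hr : 0 < r) (hk : 0 < k)
    (P : Fin f → Polynomial ℤ)
    (hlead : ∀ j, 0 < (P j).leadingCoeff) (h0 : ∀ j, (P j).eval 0 = 0) :
    ∃ E : Fin r → Set (Fin k → ℕ), (∀ p : Fin k → ℕ, ∃! i, p ∈ E i) ∧
      ∀ F : Fin t → Set (Fin k → ℕ), (∀ p : Fin k → ℕ, ∃! m, p ∈ F m) →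
        ∃ (m : Fin t) (x₀ : ℕ) (H : Set ℕ), 0 < x₀ ∧
          (0 < atTop.liminf (fun N : ℕ =>
            (((Finset.Icc 1 N).filter (fun n => n ∈ H)).card : ℝ) / N)) ∧
          ∀ h ∈ H, ∀ j : Fin f, 0 ≤ (P j).eval (h : ℤ) ∧
            ∀ i : Fin r,
              Set.Infinite
                (((fun p : Fin k → ℕ =>
                    p + fun _ => x₀ + ((P j).eval (h : ℤ)).toNat) '' F m) ∩ E i) := by
  refine ⟨fun i => {p | raimiColor r (p ⟨0, hk⟩) = i},
    fun p => ⟨⟨_, digit_lt hr _ _⟩, rfl, fun i hi => Fin.ext hi.symm⟩, fun F hF => ?_⟩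
  choose χ hχ using fun n : ℕ => (hF fun _ => n).exists
  obtain ⟨m, Q, hQ, x, hx⟩ := exists_color_forall_modEq_infinite hr χ
  obtain ⟨B, hB⟩ := eventually_atTop.1 <|
    eventually_all.2 fun j => Polynomial.eventually_nonneg_eval_natCast (hlead j)
  refine ⟨m, x + Q, {h | Q ∣ h ∧ B ≤ h}, by omega,
    lowerDensity_pos_of_multiples hQ fun n hQn hBn => ⟨hQn, hBn⟩,
    fun h ⟨hQh, hBh⟩ j => ⟨hB h hBh j, fun i => ?_⟩⟩
  set T := ((P j).eval (h : ℤ)).toNat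
  have hT : Q ∣ T := by
    rw [← Int.natCast_dvd_natCast, Int.toNat_of_nonneg (hB h hBh j)]
    exact Polynomial.dvd_eval_of_eval_zero (h0 j) (Int.natCast_dvd_natCast.2 hQh)
  have hc : x + Q + T ≡ x [MOD Q] := by
    simpa [add_assoc] using (Nat.modEq_zero_iff_dvd.2 (dvd_add dvd_rfl hT)).add_left x
  refine ((hx _ hc i i.isLt).image (f := fun n _ => n + (x + Q + T))
    fun n₁ _ n₂ _ hn => ?_).mono ?_
  · simpa using congrFun hn ⟨0, hk⟩
  · rintro _ ⟨n, ⟨hχn, hn⟩, rfl⟩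
    exact ⟨⟨fun _ => n, hχn ▸ hχ n, rfl⟩, hn⟩

/-- Theorem 1.3 (polynomial Raimi): for non-constant `P⁽¹⁾,…,P⁽ᶠ⁾ ∈ ℤ[x]` with positive
leading coefficients and `P⁽ʲ⁾(0)=0`, there is a partition `ℕ^k = E₁ ∪ ⋯ ∪ E_r` such that
for every `t`-coloring `ℕ^k = F₁ ∪ ⋯ ∪ F_t` there are a color class `F_m`, `x₀ ∈ ℕ` and a
set `H ⊆ ℕ` of positive lower density such that for every `h ∈ H`, every `j` and every `i`,
the set `(F_m + (x₀ + P⁽ʲ⁾(h))·𝟙_k) ∩ E_i` is infinite. -/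
theorem raimi_polynomial (r t k f : ℕ) (hr : 0 < r) (ht : 0 < t) (hk : 0 < k) (hf : 0 < f)
    (P : Fin f → Polynomial ℤ) (hdeg : ∀ j, 0 < (P j).natDegree)
    (hlead : ∀ j, 0 < (P j).leadingCoeff) (h0 : ∀ j, (P j).eval 0 = 0) :
    ∃ E : Fin r → Set (Fin k → ℕ), (∀ p : Fin k → ℕ, ∃! i, p ∈ E i) ∧
      ∀ F : Fin t → Set (Fin k → ℕ), (∀ p : Fin k → ℕ, ∃! m, p ∈ F m) →
        ∃ (m : Fin t) (x₀ : ℕ) (H : Set ℕ), 0 < x₀ ∧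
          (0 < atTop.liminf (fun N : ℕ =>
            (((Finset.Icc 1 N).filter (fun n => n ∈ H)).card : ℝ) / N)) ∧
          ∀ h ∈ H, ∀ j : Fin f, 0 ≤ (P j).eval (h : ℤ) ∧
            ∀ i : Fin r,
              Set.Infinite
                (((fun p : Fin k → ℕ =>
                    p + fun _ => x₀ + ((P j).eval (h : ℤ)).toNat) '' F m) ∩ E i) :=
  raimi_polynomial_general r t k f hr hk P hlead h0
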